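/- Let Q be a ground disjunctive logic program, let U be a set of literals none of which occurs in the head of any rule of Q, and let S be a consistent set of literals with S ⊆ U. For each rule r ∈ Q, let its U-part consist of the literals of pbody(r) ∩ U and nbody(r) ∩ U. Let Q[S] be the program obtained from Q by deleting every rule r such that some literal of pbody(r) ∩ U is not in S or some literal of nbody(r) ∩ U is in S, and by removing the U-part from the bodies of the remaining rules. Then Q ∪ S and Q[S] ∪ S have exactly the same answer sets (where Π ∪ S denotes Π extended with the literals of S as facts). -/

import Mathlib

open scoped Classical

namespace ASP

universe u v

/-- A ground literal: an atom together with a sign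
(`true` for the atom itself, `false` for its strong negation `¬a`).
The atom `|l|` of a literal `l` is its first component `l.1`. -/
abbrev Lit (α : Type u) : Type u := α × Bool

/-- A ground disjunctive rule, consisting of three finite sets of literals:
head, positive body and negative body. -/
structure Rule (α : Type u) : Type u where
  head : Finset (Lit α)
  pbody : Finset (Lit α)
  nbody : Finset (Lit α)
deriving DecidableEq

variable {α : Type u}

/-- A set of literals is consistent if it contains no atom together with
its strong negation. -/
def Consistent (S : Set (Lit α)) : Prop :=
  ∀ a : α, ¬((a, true) ∈ S ∧ (a, false) ∈ S)

/-- `S` satisfies a rule `r`: the head intersects `S` whenever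
`pbody(r) ⊆ S` and `nbody(r) ∩ S = ∅`. -/
def SatRule (S : Set (Lit α)) (r : Rule α) : Prop :=
  ((∀ l ∈ r.pbody, l ∈ S) ∧ (∀ l ∈ r.nbody, l ∉ S)) → ∃ l ∈ r.head, l ∈ S

/-- Answer sets of a positive program: `⊆`-minimal consistent sets of
literals satisfying all rules. -/
def IsAnswerSetPos (P : Set (Rule α)) (S : Set (Lit α)) : Prop :=
  Consistent S ∧ (∀ r ∈ P, SatRule S r) ∧
    ∀ T : Set (Lit α), Consistent T → (∀ r ∈ P, SatRule T r) → T ⊆ S → T = S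

/-- The reduct `Π^S` of a program w.r.t. a set of literals `S`. -/
def reduct (P : Set (Rule α)) (S : Set (Lit α)) : Set (Rule α) :=
  {x | ∃ r ∈ P, (∀ l ∈ r.nbody, l ∉ S) ∧ x = ⟨r.head, r.pbody, ∅⟩}

/-- `S` is an answer set of `P` iff `S` is an answer set of the positive
program `P^S`. -/
def IsAnswerSet (P : Set (Rule α)) (S : Set (Lit α)) : Prop :=
  IsAnswerSetPos (reduct P S) S

/-- `Lit(Π)`: the literals occurring in a program. -/
def litsOf (P : Set (Rule α)) : Set (Lit α) :=
  {l | ∃ r ∈ P, l ∈ r.head ∨ l ∈ r.pbody ∨ l ∈ r.nbody}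

/-- Edges of the positive dependency graph: from each head literal of a
rule to each of its positive body literals. -/
def DepEdge (P : Set (Rule α)) (l l' : Lit α) : Prop :=
  ∃ r ∈ P, l ∈ r.head ∧ l' ∈ r.pbody

/-- Head-cycle freeness: no two distinct literals occurring together in
some rule head lie on a common cycle of the positive dependency graph. -/
def HeadCycleFree (P : Set (Rule α)) : Prop :=
  ∀ r ∈ P, ∀ l ∈ r.head, ∀ l' ∈ r.head, l ≠ l' →
    ¬(Relation.ReflTransGen (DepEdge P) l l' ∧ Relation.ReflTransGen (DepEdge P) l' l)

/-- `P ∪ S`: the program `P` extended with the literals of `S` as facts. -/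
def withFacts (P : Set (Rule α)) (S : Set (Lit α)) : Set (Rule α) :=
  P ∪ {x | ∃ l ∈ S, x = ⟨{l}, ∅, ∅⟩}

/-- Partial evaluation `Q[S]` of `Q` w.r.t. `U` and `S`: delete every rule
whose `U`-part of the body is false in `S`, and remove the `U`-part from
the bodies of the remaining rules. -/
def peval {α : Type u} (Q : Set (Rule α)) (U S : Set (Lit α)) : Set (Rule α) :=
  {x | ∃ r ∈ Q,
    (∀ l ∈ r.pbody, l ∈ U → l ∈ S) ∧ (∀ l ∈ r.nbody, l ∈ U → l ∉ S) ∧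
    x = ⟨r.head, r.pbody.filter (fun l => l ∉ U), r.nbody.filter (fun l => l ∉ U)⟩}

/-! Since no literal of `U` occurs in a head, literals of `U` can only enter an answer set as
facts, so every answer set `T` of either program has `T ∩ U ⊆ S ⊆ T`. For such `T`, the `U`-part
of each rule body is already decided by `S`, which is exactly what partial evaluation does in
advance; hence the two reducts w.r.t. `T` have the same models below `T`, and so the same
minimal ones. -/

def IsModel (P : Set (Rule α)) (W : Set (Lit α)) : Prop :=
  ∀ r ∈ P, SatRule W r

theorem Consistent.mono {S T : Set (Lit α)} (hST : S ⊆ T) (hT : Consistent T) :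
    Consistent S :=
  fun a h => hT a ⟨hST h.1, hST h.2⟩

theorem IsAnswerSet.of_isModel_reduct_iff {P₁ P₂ : Set (Rule α)} {T : Set (Lit α)}
    (h : ∀ W ⊆ T, IsModel (reduct P₁ T) W ↔ IsModel (reduct P₂ T) W)
    (hT : IsAnswerSet P₁ T) : IsAnswerSet P₂ T :=
  ⟨hT.1, (h T subset_rfl).mp hT.2.1, fun W hWc hW hWT => hT.2.2 W hWc ((h W hWT).mpr hW) hWT⟩

theorem isAnswerSet_congr {P₁ P₂ : Set (Rule α)} {T : Set (Lit α)}
    (h : ∀ W ⊆ T, IsModel (reduct P₁ T) W ↔ IsModel (reduct P₂ T) W) :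
    IsAnswerSet P₁ T ↔ IsAnswerSet P₂ T :=
  ⟨.of_isModel_reduct_iff h, .of_isModel_reduct_iff fun W hW => (h W hW).symm⟩

theorem facts_subset_of_isModel_reduct {P : Set (Rule α)} {S T W : Set (Lit α)}
    (hW : IsModel (reduct (withFacts P S) T) W) : S ⊆ W := by
  intro l hl
  have hfact : (⟨{l}, ∅, ∅⟩ : Rule α) ∈ reduct (withFacts P S) T :=
    ⟨⟨{l}, ∅, ∅⟩, Or.inr ⟨l, hl, rfl⟩, by simp, rfl⟩
  simpa using hW _ hfact ⟨by simp, by simp⟩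

theorem IsAnswerSet.facts_subset {P : Set (Rule α)} {S T : Set (Lit α)}
    (hT : IsAnswerSet (withFacts P S) T) : S ⊆ T :=
  facts_subset_of_isModel_reduct hT.2.1

/-- Removing `T ∩ U` from `T` and adding back `S` leaves a model of the reduct, since no head
meets `U`; minimality then forces `T ∩ U ⊆ S`. -/
theorem IsAnswerSet.inter_subset_facts {P : Set (Rule α)} {U S T : Set (Lit α)}
    (hU : ∀ r ∈ P, ∀ l ∈ r.head, l ∉ U) (hT : IsAnswerSet (withFacts P S) T) :
    T ∩ U ⊆ S := by
  obtain ⟨hc, hsat, hmin⟩ := hT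
  have hsub : T \ U ∪ S ⊆ T :=
    Set.union_subset Set.sdiff_subset (facts_subset_of_isModel_reduct hsat)
  have hmodel : IsModel (reduct (withFacts P S) T) (T \ U ∪ S) := by
    rintro _ ⟨r, hr | ⟨l, hl, rfl⟩, hnb, rfl⟩ hbody
    · obtain ⟨l, hlh, hlT⟩ :=
        hsat _ ⟨r, Or.inl hr, hnb, rfl⟩ ⟨fun l hl => hsub (hbody.1 l hl), by simp⟩
      exact ⟨l, hlh, Or.inl ⟨hlT, hU r hr l hlh⟩⟩
    · exact ⟨l, by simp, Or.inr hl⟩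
  rw [← hmin _ (hc.mono hsub) hmodel hsub]
  rintro l ⟨hlT | hlS, hlU⟩
  exacts [absurd hlU hlT.2, hlS]

theorem isModel_reduct_withFacts_peval_iff {Q : Set (Rule α)} {U S T W : Set (Lit α)}
    (hST : S ⊆ T) (hTU : T ∩ U ⊆ S) (hWT : W ⊆ T) :
    IsModel (reduct (withFacts Q S) T) W ↔
      IsModel (reduct (withFacts (peval Q U S) S) T) W := by
  constructor
  · intro hW
    have hSW := facts_subset_of_isModel_reduct hW
    rintro _ ⟨_, ⟨r, hr, hpU, hnU, rfl⟩ | ⟨l, hl, rfl⟩, hnb, rfl⟩ hbody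
    · have hnbT : ∀ l ∈ r.nbody, l ∉ T := by
        intro l hl hlT
        by_cases hlU : l ∈ U
        · exact hnU l hl hlU (hTU ⟨hlT, hlU⟩)
        · exact hnb l (Finset.mem_filter.mpr ⟨hl, hlU⟩) hlT
      have hpbW : ∀ l ∈ r.pbody, l ∈ W := by
        intro l hl
        by_cases hlU : l ∈ U
        · exact hSW (hpU l hl hlU)
        · exact hbody.1 l (Finset.mem_filter.mpr ⟨hl, hlU⟩)
      exact hW ⟨r.head, r.pbody, ∅⟩ ⟨r, Or.inl hr, hnbT, rfl⟩ ⟨hpbW, by simp⟩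
    · exact ⟨l, by simp, hSW hl⟩
  · intro hW
    have hSW := facts_subset_of_isModel_reduct hW
    rintro _ ⟨r, hr | ⟨l, hl, rfl⟩, hnb, rfl⟩ hbody
    · have hpeval : (⟨r.head, r.pbody.filter (· ∉ U), r.nbody.filter (· ∉ U)⟩ : Rule α) ∈
          peval Q U S :=
        ⟨r, hr, fun l hl hlU => hTU ⟨hWT (hbody.1 l hl), hlU⟩,
          fun l hl _ hlS => hnb l hl (hST hlS), rfl⟩
      exact hW ⟨r.head, r.pbody.filter (· ∉ U), ∅⟩
        ⟨_, Or.inl hpeval, fun l hl => hnb l (Finset.mem_of_mem_filter l hl), rfl⟩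
        ⟨fun l hl => hbody.1 l (Finset.mem_of_mem_filter l hl), by simp⟩
    · exact ⟨l, by simp, hSW hl⟩

theorem statement9_general {α : Type u} (Q : Set (Rule α))
    (U : Set (Lit α)) (hU : ∀ r ∈ Q, ∀ l ∈ r.head, l ∉ U)
    (S : Set (Lit α)) :
    ∀ T : Set (Lit α),
      IsAnswerSet (withFacts Q S) T ↔ IsAnswerSet (withFacts (peval Q U S) S) T := by
  have hU' : ∀ r ∈ peval Q U S, ∀ l ∈ r.head, l ∉ U := by
    rintro _ ⟨r, hr, _, _, rfl⟩
    exact hU r hr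
  have hcongr : ∀ T : Set (Lit α), S ⊆ T → T ∩ U ⊆ S →
      (IsAnswerSet (withFacts Q S) T ↔ IsAnswerSet (withFacts (peval Q U S) S) T) :=
    fun T hST hTU => isAnswerSet_congr fun _ hWT =>
      isModel_reduct_withFacts_peval_iff hST hTU hWT
  exact fun T =>
    ⟨fun hT => (hcongr T hT.facts_subset (hT.inter_subset_facts hU)).mp hT,
      fun hT => (hcongr T hT.facts_subset (hT.inter_subset_facts hU')).mpr hT⟩

/-- If no literal of `U` occurs in a head of `Q` and `S ⊆ U` is consistent,
then `Q ∪ S` and `Q[S] ∪ S` have exactly the same answer sets. -/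
theorem statement9 {α : Type u} (Q : Set (Rule α)) (hfin : Q.Finite)
    (U : Set (Lit α)) (hU : ∀ r ∈ Q, ∀ l ∈ r.head, l ∉ U)
    (S : Set (Lit α)) (hcons : Consistent S) (hSU : S ⊆ U) :
    ∀ T : Set (Lit α),
      IsAnswerSet (withFacts Q S) T ↔ IsAnswerSet (withFacts (peval Q U S) S) T :=
  statement9_general Q U hU S

end ASP
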